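/- arXiv:2512.07816 — 2 statements merged into one kernel-verified Lean document; each statement's English description precedes it below -/
import Mathlib

section
/- Let T be a labeled monomial tree and, for each unordered pair of labels {i,j}, let b_ij denote the number of edges of T whose endpoint labels are {i,j}. Then Σ_{{i,j} : b_ij > 2} b_ij ≤ 6·Δ(T). -/
/-- A labeled monomial tree over labels `{1,…,N}` (encoded as `Fin N`): a finite rooted
tree of depth `t` whose vertices lie in levels `0,…,t` (root at level `t`, all leaves at
level `0`), each vertex carrying a label, subject to the non-backtracking condition and
the condition that every edge-label pair occurs on at least two edges. -/
structure LabeledMonomialTree (N : ℕ) where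
  depth : ℕ
  V : Type
  [instFintype : Fintype V]
  [instDecEq : DecidableEq V]
  root : V
  parent : V → V
  level : V → ℕ
  label : V → Fin N
  parent_root : parent root = root
  level_root : level root = depth
  level_le : ∀ v, level v ≤ depth
  level_parent : ∀ v, v ≠ root → level (parent v) = level v + 1
  leaves_at_zero : ∀ v, 1 ≤ level v → ∃ w, w ≠ root ∧ parent w = v
  nonbacktracking : ∀ w, w ≠ root → parent w ≠ root →
    label (parent (parent w)) ≠ label w
  edges_doubled : ∀ v, v ≠ root → ∃ w, w ≠ root ∧ w ≠ v ∧
    s(label w, label (parent w)) = s(label v, label (parent v))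

attribute [instance] LabeledMonomialTree.instFintype LabeledMonomialTree.instDecEq

namespace LabeledMonomialTree

variable {N : ℕ}

/-- The number of edges of `T` (each non-root vertex contributes the edge to its
parent). -/
def numEdges (T : LabeledMonomialTree N) : ℕ := Fintype.card {v : T.V // v ≠ T.root}

/-- The number of distinct vertex labels of `T`. -/
def numLabels (T : LabeledMonomialTree N) : ℕ := (Finset.univ.image T.label).card

/-- The excess `Δ(T) = |E(T)|/2 - |V(T)| + 1`, where `|V(T)|` is the number of distinct
vertex labels. -/
def excess (T : LabeledMonomialTree N) : ℚ :=
  (T.numEdges : ℚ) / 2 - (T.numLabels : ℚ) + 1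

/-- The unordered pair of endpoint labels of the edge from `v` to its parent. -/
def edgeSym (T : LabeledMonomialTree N) (v : T.V) : Sym2 (Fin N) :=
  s(T.label v, T.label (T.parent v))

/-- The number of vertices of `T` carrying the label `i`. -/
noncomputable def mult (T : LabeledMonomialTree N) (i : Fin N) : ℕ :=
  Set.ncard {v : T.V | T.label v = i}

end LabeledMonomialTree

/-!
Write `b p` for the number of edges with label pair `p`. Every pair that occurs does so at
least twice, and for `b ∈ {0} ∪ [2, ∞)` one has `[b > 2] b + 6 [b > 0] ≤ 3 b`; summing,
`Σ_{b_p > 2} b_p + 6 · #{p | b_p > 0} ≤ 3 |E(T)|`. On the other hand the tree is connected,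
so every label other than the root's is reached by an edge: choosing a highest vertex of
each such label, the edges to their parents carry pairwise distinct label pairs, whence
`|V(T)| ≤ #{p | b_p > 0} + 1`. Combining the two bounds gives `Σ_{b_p > 2} b_p ≤ 6 Δ(T)`.
-/

open Finset

theorem sum_filter_two_lt_add_six_mul_card_le {α : Type*} (s : Finset α) (b : α → ℕ)
    (hb : ∀ p ∈ s, 0 < b p → 2 ≤ b p) :
    ∑ p ∈ s.filter (fun p => 2 < b p), b p + 6 * (s.filter fun p => 0 < b p).card ≤
      3 * ∑ p ∈ s, b p := by
  rw [sum_filter, card_filter, mul_sum, mul_sum, ← sum_add_distrib]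
  refine sum_le_sum fun p hp => ?_
  have := hb p hp
  split_ifs <;> omega

namespace LabeledMonomialTree

variable {N : ℕ} (T : LabeledMonomialTree N)

def edgeMult (p : Sym2 (Fin N)) : ℕ :=
  (univ.filter fun v => v ≠ T.root ∧ T.edgeSym v = p).card

theorem ncard_edgeSym_eq_edgeMult (p : Sym2 (Fin N)) :
    Set.ncard {v : T.V | v ≠ T.root ∧ T.edgeSym v = p} = T.edgeMult p := by
  rw [edgeMult, ← Set.ncard_coe_finset, coe_filter]
  simp only [mem_univ, true_and]

theorem sum_edgeMult : ∑ p, T.edgeMult p = T.numEdges := by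
  rw [numEdges, Fintype.card_subtype,
    card_eq_sum_card_fiberwise
      fun v (_ : v ∈ univ.filter (· ≠ T.root)) => mem_univ (T.edgeSym v)]
  simp only [edgeMult, filter_filter]

theorem two_le_edgeMult {p : Sym2 (Fin N)} (hp : 0 < T.edgeMult p) : 2 ≤ T.edgeMult p := by
  obtain ⟨v, hv⟩ := card_pos.mp hp
  obtain ⟨-, hv_root, rfl⟩ := mem_filter.mp hv
  obtain ⟨w, hw_root, hwv, hw_edge⟩ := T.edges_doubled v hv_root
  exact one_lt_card.mpr ⟨v, hv, w, mem_filter.mpr ⟨mem_univ w, hw_root, hw_edge⟩, hwv.symm⟩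

def IsTopmost (v : T.V) : Prop :=
  ∀ w, T.label w = T.label v → T.level w ≤ T.level v

theorem exists_isTopmost (v : T.V) : ∃ u, T.label u = T.label v ∧ T.IsTopmost u := by
  obtain ⟨u, hu, hmax⟩ := exists_max_image (univ.filter fun w => T.label w = T.label v) T.level
    ⟨v, mem_filter.mpr ⟨mem_univ v, rfl⟩⟩
  obtain ⟨-, hu⟩ := mem_filter.mp hu
  exact ⟨u, hu, fun w hw => hmax w (mem_filter.mpr ⟨mem_univ w, hw.trans hu⟩)⟩

/-- If the label pairs were crossed, each parent would sit strictly above the topmost vertex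
of its own label. -/
theorem label_eq_of_edgeSym_eq {v w : T.V} (hv : v ≠ T.root) (hw : w ≠ T.root)
    (hv_top : T.IsTopmost v) (hw_top : T.IsTopmost w) (h : T.edgeSym v = T.edgeSym w) :
    T.label v = T.label w := by
  rcases Sym2.eq_iff.mp h with ⟨hlabel, -⟩ | ⟨hvw, hwv⟩
  · exact hlabel
  · have := hw_top _ hwv
    have := hv_top _ hvw.symm
    have := T.level_parent v hv
    have := T.level_parent w hw
    omega

theorem numLabels_le_card_edgeMult_pos_add_one :
    T.numLabels ≤ (univ.filter fun p => 0 < T.edgeMult p).card + 1 := by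
  set I := univ.image T.label
  set r := T.label T.root
  have htop : ∀ i ∈ I.erase r, ∃ u, u ≠ T.root ∧ T.label u = i ∧ T.IsTopmost u := by
    intro i hi
    obtain ⟨v, -, rfl⟩ := mem_image.mp (mem_of_mem_erase hi)
    obtain ⟨u, hu, hu_top⟩ := T.exists_isTopmost v
    exact ⟨u, fun h => ne_of_mem_erase hi (h ▸ hu).symm, hu, hu_top⟩
  have : Nonempty T.V := ⟨T.root⟩
  choose! top htop_ne_root htop_label htop_top using htop
  have hmaps : ∀ i ∈ I.erase r,
      T.edgeSym (top i) ∈ univ.filter fun p => 0 < T.edgeMult p := fun i hi =>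
    mem_filter.mpr ⟨mem_univ _, card_pos.mpr
      ⟨top i, mem_filter.mpr ⟨mem_univ _, htop_ne_root i hi, rfl⟩⟩⟩
  have hinj : Set.InjOn (fun i => T.edgeSym (top i)) (I.erase r) := fun i hi j hj h => by
    rw [← htop_label i hi, ← htop_label j hj]
    exact T.label_eq_of_edgeSym_eq (htop_ne_root i hi) (htop_ne_root j hj)
      (htop_top i hi) (htop_top j hj) h
  have hcard := card_le_card_of_injOn _ hmaps hinj
  have hroot : r ∈ I := mem_image_of_mem _ (mem_univ _)
  rw [card_erase_of_mem hroot] at hcard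
  have := card_pos.mpr ⟨r, hroot⟩
  change I.card ≤ _
  omega

end LabeledMonomialTree

/-- **Bound on edge multiplicities above two.** For a labeled monomial tree `T`, writing
`b_{ij}` for the number of edges whose unordered pair of endpoint labels is `{i,j}`,
one has `Σ_{{i,j} : b_{ij} > 2} b_{ij} ≤ 6 Δ(T)`. -/
theorem sum_edge_mult_gt_two_le_six_excess {N : ℕ} (T : LabeledMonomialTree N) :
    (∑ p ∈ Finset.univ.filter
        (fun p : Sym2 (Fin N) =>
          2 < Set.ncard {v : T.V | v ≠ T.root ∧ T.edgeSym v = p}),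
      (Set.ncard {v : T.V | v ≠ T.root ∧ T.edgeSym v = p} : ℚ)) ≤ 6 * T.excess := by
  simp only [LabeledMonomialTree.ncard_edgeSym_eq_edgeMult]
  have hmult := sum_filter_two_lt_add_six_mul_card_le univ T.edgeMult
    fun _ _ => T.two_le_edgeMult
  rw [T.sum_edgeMult] at hmult
  have hlabels := T.numLabels_le_card_edgeMult_pos_add_one
  rw [LabeledMonomialTree.excess, ← Nat.cast_sum]
  have : ((∑ p ∈ univ.filter fun p => 2 < T.edgeMult p, T.edgeMult p : ℕ) : ℚ) +
      6 * T.numLabels ≤ 3 * T.numEdges + 6 := by exact_mod_cast (by omega)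
  linarith
end

section
/- If T is a labeled monomial tree with excess Δ(T) = 0, then T contains no bad pairs: for every pair consisting of a T₁ edge (v₁,u₁) and its matching T₂ edge (v₂,u₂), the vertices v₁ and v₂ lie in the same generation and the vertices u₁ and u₂ lie in the same generation. -/
namespace LabeledMonomialTree

variable {N : ℕ}

/-- A standard ordering of the edges of `T` (edges being identified with their child
vertices): an injective enumeration which lists edges generation by generation from the
leaves up to the root (edges with child at a lower level come first), and within a
generation orders edges consistently with the order of their parent edges. -/
structure StdOrder (T : LabeledMonomialTree N) where
  ord : T.V → ℕ
  inj : Function.Injective ord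
  level_mono : ∀ v w, v ≠ T.root → w ≠ T.root → T.level v < T.level w → ord v < ord w
  parent_mono : ∀ v w, v ≠ T.root → w ≠ T.root → T.level v = T.level w →
    ord v < ord w → ord (T.parent v) ≤ ord (T.parent w)

/-- A `T₁` edge: the first edge, in the standard ordering, whose child label is the
given one (the child label has not appeared previously). -/
def IsT1 (T : LabeledMonomialTree N) (O : StdOrder T) (v : T.V) : Prop :=
  v ≠ T.root ∧ ∀ w, w ≠ T.root → O.ord w < O.ord v → T.label w ≠ T.label v

/-- A `T₂` edge: the second occurrence of an edge with a given pair of endpoint labels,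
whose first occurrence was a `T₁` edge. -/
def IsT2 (T : LabeledMonomialTree N) (O : StdOrder T) (v : T.V) : Prop :=
  v ≠ T.root ∧ ∃ w, w ≠ T.root ∧ O.ord w < O.ord v ∧ T.edgeSym w = T.edgeSym v ∧
    T.IsT1 O w ∧
    ∀ u, u ≠ T.root → T.edgeSym u = T.edgeSym v → O.ord u < O.ord v → u = w

/-- A `T₃` edge: any edge which is neither `T₁` nor `T₂`. -/
def IsT3 (T : LabeledMonomialTree N) (O : StdOrder T) (v : T.V) : Prop :=
  v ≠ T.root ∧ ¬ T.IsT1 O v ∧ ¬ T.IsT2 O v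

end LabeledMonomialTree

/-! Every used label `l` other than the root label has a *top vertex*, one of maximal level
among those labelled `l`; its parent edge carries the labels `{l, p l}`, `p = parentLabel`.
Two top vertices with the same edge labels would each sit strictly above the other, so a tree
with `n` labels has at least `n - 1` distinct edge-label pairs. Each pair occurs on at least two
of the `2n - 2` edges that `Δ(T) = 0` allows, so there are no other pairs. Going down from the
root, non-backtracking then forces every edge to run from a child labelled `l` to a parent
labelled `p l`, so the level of a vertex is read off its label: it is `depth` minus the number
of steps of `p` leading from the label to the root label. -/

namespace LabeledMonomialTree

variable {N : ℕ} (T : LabeledMonomialTree N)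

instance : Nonempty T.V := ⟨T.root⟩

def labels : Finset (Fin N) := Finset.univ.image T.label

def nonRootVertices : Finset T.V := Finset.univ.filter (· ≠ T.root)

def edgeLabels : Finset (Sym2 (Fin N)) := T.nonRootVertices.image T.edgeSym

/-- Junk unless `l ∈ T.labels`. -/
noncomputable def topVertex (l : Fin N) : T.V :=
  Classical.epsilon fun v => T.label v = l ∧ ∀ w, T.label w = l → T.level w ≤ T.level v

noncomputable def parentLabel (l : Fin N) : Fin N := T.label (T.parent (T.topVertex l))

variable {T}

theorem level_lt_depth {v : T.V} (hv : v ≠ T.root) : T.level v < T.depth := by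
  have := T.level_parent v hv
  have := T.level_le (T.parent v)
  omega

theorem induction_from_root {P : T.V → Prop} (root : P T.root)
    (parent : ∀ v, v ≠ T.root → P (T.parent v) → P v) (v : T.V) : P v := by
  suffices ∀ k v, T.depth - T.level v ≤ k → P v from this _ v le_rfl
  intro k
  induction k with
  | zero =>
    intro v hv
    by_cases hroot : v = T.root
    · exact hroot ▸ root
    · have := level_lt_depth hroot
      omega
  | succ k ih =>
    intro v hv
    by_cases hroot : v = T.root
    · exact hroot ▸ root
    · have := T.level_parent v hroot
      exact parent v hroot (ih _ (by omega))

theorem mem_labels (v : T.V) : T.label v ∈ T.labels :=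
  Finset.mem_image_of_mem _ (Finset.mem_univ _)

theorem mem_nonRootVertices {v : T.V} : v ∈ T.nonRootVertices ↔ v ≠ T.root := by
  simp [nonRootVertices]

theorem card_nonRootVertices : T.nonRootVertices.card = T.numEdges :=
  (Fintype.card_subtype _).symm

theorem edgeSym_mem_edgeLabels {v : T.V} (hv : v ≠ T.root) : T.edgeSym v ∈ T.edgeLabels :=
  Finset.mem_image_of_mem _ (mem_nonRootVertices.2 hv)

variable (T) in
theorem two_mul_card_edgeLabels_le : 2 * T.edgeLabels.card ≤ T.numEdges := by
  rw [← card_nonRootVertices]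
  refine Finset.mul_card_image_le_card _ 2 fun e he => ?_
  obtain ⟨v, hv, rfl⟩ := Finset.mem_image.1 he
  obtain ⟨w, hw, hwv, hsym⟩ := T.edges_doubled v (mem_nonRootVertices.1 hv)
  refine Finset.one_lt_card.2 ⟨v, ?_, w, ?_, hwv.symm⟩
  · exact Finset.mem_filter.2 ⟨hv, rfl⟩
  · exact Finset.mem_filter.2 ⟨mem_nonRootVertices.2 hw, hsym⟩

theorem numEdges_add_two (hΔ : T.excess = 0) : T.numEdges + 2 = 2 * T.numLabels := by
  have h : (T.numEdges : ℚ) / 2 - T.numLabels + 1 = 0 := hΔ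
  exact_mod_cast (by linarith : (T.numEdges : ℚ) + 2 = 2 * T.numLabels)

theorem topVertex_spec {l : Fin N} (hl : l ∈ T.labels) :
    T.label (T.topVertex l) = l ∧
      ∀ w, T.label w = l → T.level w ≤ T.level (T.topVertex l) := by
  obtain ⟨v₀, -, hv₀⟩ := Finset.mem_image.1 hl
  obtain ⟨v, hv, hmax⟩ := Finset.exists_max_image (Finset.univ.filter (T.label · = l)) T.level
    ⟨v₀, Finset.mem_filter.2 ⟨Finset.mem_univ _, hv₀⟩⟩
  exact Classical.epsilon_spec (p := fun v => T.label v = l ∧ ∀ w, T.label w = l → _)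
    ⟨v, (Finset.mem_filter.1 hv).2,
      fun w hw => hmax w (Finset.mem_filter.2 ⟨Finset.mem_univ _, hw⟩)⟩

theorem level_le_topVertex {l : Fin N} (hl : l ∈ T.labels) {w : T.V}
    (hw : T.label w = l) : T.level w ≤ T.level (T.topVertex l) :=
  (topVertex_spec hl).2 w hw

theorem topVertex_ne_root {l : Fin N} (hl : l ∈ T.labels) (hr : l ≠ T.label T.root) :
    T.topVertex l ≠ T.root := fun h => hr (h ▸ (topVertex_spec hl).1).symm

theorem level_parent_topVertex {l : Fin N} (hl : l ∈ T.labels) (hr : l ≠ T.label T.root) :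
    T.level (T.parent (T.topVertex l)) = T.level (T.topVertex l) + 1 :=
  T.level_parent _ (topVertex_ne_root hl hr)

theorem edgeSym_topVertex {l : Fin N} (hl : l ∈ T.labels) :
    T.edgeSym (T.topVertex l) = s(l, T.parentLabel l) := by
  rw [edgeSym, (topVertex_spec hl).1, parentLabel]

variable (T) in
/-- The pair `{a, p a} = {b, p b}` with `a ≠ b` would put each top vertex strictly above the
other. -/
theorem injOn_edgeSym_topVertex :
    Set.InjOn (fun l => T.edgeSym (T.topVertex l)) (T.labels.erase (T.label T.root) : Set _) := by
  intro a ha b hb hab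
  obtain ⟨har, haL⟩ := Finset.mem_erase.1 ha
  obtain ⟨hbr, hbL⟩ := Finset.mem_erase.1 hb
  simp only [edgeSym_topVertex haL, edgeSym_topVertex hbL] at hab
  rcases Sym2.eq_iff.1 hab with ⟨h, -⟩ | ⟨hab, hba⟩
  · exact h
  · have := level_le_topVertex haL (w := T.parent (T.topVertex b)) hab.symm
    have := level_le_topVertex hbL (w := T.parent (T.topVertex a)) hba
    have := level_parent_topVertex haL har
    have := level_parent_topVertex hbL hbr
    omega

variable (T) in
theorem mapsTo_edgeSym_topVertex :
    Set.MapsTo (fun l => T.edgeSym (T.topVertex l))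
      (T.labels.erase (T.label T.root) : Set _) T.edgeLabels := fun _ hl =>
  edgeSym_mem_edgeLabels <|
    topVertex_ne_root (Finset.mem_of_mem_erase hl) (Finset.ne_of_mem_erase hl)

theorem exists_edgeSym_eq (hΔ : T.excess = 0) {v : T.V} (hv : v ≠ T.root) :
    ∃ l, l ≠ T.label T.root ∧ T.edgeSym v = s(l, T.parentLabel l) := by
  have hcard : T.edgeLabels.card ≤ (T.labels.erase (T.label T.root)).card := by
    have := numEdges_add_two hΔ
    have := two_mul_card_edgeLabels_le T
    rw [Finset.card_erase_of_mem (mem_labels _)]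
    exact (by omega : T.edgeLabels.card ≤ T.numLabels - 1)
  obtain ⟨l, hl, hlv⟩ := Finset.surjOn_of_injOn_of_card_le _ (mapsTo_edgeSym_topVertex T)
    (injOn_edgeSym_topVertex T) hcard (edgeSym_mem_edgeLabels hv)
  obtain ⟨hr, hl⟩ := Finset.mem_erase.1 hl
  exact ⟨l, hr, hlv.symm.trans (edgeSym_topVertex hl)⟩

/-- Had the edge `v` run from label `p l` up to `l`, its parent's edge would run from `l` up to
`p l` again, which non-backtracking forbids. -/
theorem label_ne_label_root_and_label_parent_eq (hΔ : T.excess = 0) (v : T.V) (hv : v ≠ T.root) :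
    T.label v ≠ T.label T.root ∧ T.label (T.parent v) = T.parentLabel (T.label v) := by
  induction v using induction_from_root with
  | root => exact absurd rfl hv
  | parent v hv ih =>
    obtain ⟨l, hr, hsym⟩ := exists_edgeSym_eq hΔ hv
    rcases Sym2.eq_iff.1 hsym with ⟨hvl, hpl⟩ | ⟨hvl, hpl⟩
    · exact ⟨hvl ▸ hr, by rw [hvl, hpl]⟩
    · have hpr : T.parent v ≠ T.root := fun h => hr (h ▸ hpl).symm
      exact absurd (by rw [(ih hpr).2, hpl, hvl]) (T.nonbacktracking v hv hpr)

theorem ne_root_iff_label_ne (hΔ : T.excess = 0) (u : T.V) :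
    u ≠ T.root ↔ T.label u ≠ T.label T.root :=
  ⟨fun hu => (label_ne_label_root_and_label_parent_eq hΔ u hu).1, fun h hu => h (hu ▸ rfl)⟩

theorem level_eq_of_label_eq (hΔ : T.excess = 0) {v w : T.V} (h : T.label v = T.label w) :
    T.level v = T.level w := by
  induction v using induction_from_root generalizing w with
  | root =>
    by_cases hw : w = T.root
    · rw [hw]
    · exact absurd h.symm ((ne_root_iff_label_ne hΔ w).1 hw)
  | parent v hv ih =>
    have hw : w ≠ T.root :=
      (ne_root_iff_label_ne hΔ w).2 (h ▸ (ne_root_iff_label_ne hΔ v).1 hv)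
    have := ih (w := T.parent w) (by rw [(label_ne_label_root_and_label_parent_eq hΔ v hv).2,
      (label_ne_label_root_and_label_parent_eq hΔ w hw).2, h])
    have := T.level_parent v hv
    have := T.level_parent w hw
    omega

end LabeledMonomialTree

theorem no_bad_pairs_of_excess_eq_zero_general {N : ℕ} (T : LabeledMonomialTree N)
    (hΔ : T.excess = 0)
    (u₁ u₂ : T.V)
    (hlabel : T.label u₁ = T.label u₂ ∧ T.label (T.parent u₁) = T.label (T.parent u₂)) :
    T.level u₁ = T.level u₂ ∧ T.level (T.parent u₁) = T.level (T.parent u₂) :=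
  ⟨T.level_eq_of_label_eq hΔ hlabel.1, T.level_eq_of_label_eq hΔ hlabel.2⟩

/-- **No bad pairs when the excess vanishes.** Let `T` be a labeled monomial tree with
`Δ(T) = 0`.  Then every pair consisting of a `T₁` edge `(v₁,u₁)` and its matching `T₂`
edge `(v₂,u₂)` (edges identified with their child vertices `u₁, u₂`, with the same pair
of endpoint labels, the `T₁` edge occurring first) is a good pair: `u₁` and `u₂` lie in
the same generation, and the parents `v₁` and `v₂` lie in the same generation. -/
theorem no_bad_pairs_of_excess_eq_zero {N : ℕ} (T : LabeledMonomialTree N)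
    (O : T.StdOrder) (hΔ : T.excess = 0)
    (u₁ u₂ : T.V) (h1 : T.IsT1 O u₁) (h2 : T.IsT2 O u₂)
    (hlabel : T.label u₁ = T.label u₂ ∧ T.label (T.parent u₁) = T.label (T.parent u₂))
    (horder : O.ord u₁ < O.ord u₂) :
    T.level u₁ = T.level u₂ ∧ T.level (T.parent u₁) = T.level (T.parent u₂) :=
  no_bad_pairs_of_excess_eq_zero_general T hΔ u₁ u₂ hlabel
end
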